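/- Let k be a field of characteristic different from 2, let G be a group, and let ρ : G → GL₂(k) be a group homomorphism such that there exists c ∈ G with ρ(c)² = 1 and det ρ(c) = −1. If the associated 2-dimensional representation of G on k² is irreducible (has no nonzero proper G-stable subspace), then for every field extension K of k the representation of G on K² obtained by extension of scalars is also irreducible. -/

import Mathlib

/-!
Let `A = ρ c`. Since `A² = 1`, `det A = -1` and `2 ≠ 0`, `A` is not scalar, so over any field
its `±1`-eigenspaces are lines, and the `ε`-eigenline contains every `A x + ε x`. A nonzero
`G`-stable `q ⊆ K²` is `A`-stable and so contains an eigenvector of `A` for some sign `ε`, hence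
the whole `ε`-eigenline, hence `A x + ε x` for every `x ∈ k²`. These lie in `q ∩ k²`, a `G`-stable
subspace of `k²` which is not all of `k²` when `q ≠ K²`; irreducibility makes it `0`, so
`A = -ε`, contradicting `det A = -1`.
-/

open Matrix Module

theorem Submodule.exists_ne_zero_apply_eq_or_eq_neg {R V : Type*} [Ring R] [AddCommGroup V]
    [Module R V] {T : V →ₗ[R] V} (hT : Function.Involutive T) {q : Submodule R V}
    (hq : ∀ x ∈ q, T x ∈ q) (hq_bot : q ≠ ⊥) : ∃ u ∈ q, u ≠ 0 ∧ (T u = u ∨ T u = -u) := by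
  obtain ⟨v, hvq, hv0⟩ := q.exists_mem_ne_zero_of_ne_bot hq_bot
  by_cases hv : T v = -v
  · exact ⟨v, hvq, hv0, Or.inr hv⟩
  · refine ⟨T v + v, q.add_mem (hq v hvq) hvq, fun h => hv (eq_neg_of_add_eq_zero_left h),
      Or.inl ?_⟩
    rw [map_add, hT v, add_comm]

namespace Matrix

variable {n : Type*} [Fintype n] [DecidableEq n]

theorem ne_smul_one_of_det_eq_neg_one {R : Type*} [CommRing R] (h2 : (2 : R) ≠ 0)
    (hn : Fintype.card n = 2) {B : Matrix n n R} (hB : B.det = -1) {ε : R} (hε : ε * ε = 1) :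
    B ≠ ε • 1 := by
  rintro rfl
  rw [det_smul, det_one, hn, mul_one, sq, hε] at hB
  exact h2 (by linear_combination hB)

theorem mulVec_mulVec_add_smul {R : Type*} [CommRing R] {B : Matrix n n R} (hB : B * B = 1)
    {ε : R} (hε : ε * ε = 1) (x : n → R) :
    B *ᵥ (B *ᵥ x + ε • x) = ε • (B *ᵥ x + ε • x) := by
  rw [mulVec_add, mulVec_mulVec, hB, one_mulVec, mulVec_smul, smul_add, smul_smul, hε, one_smul,
    add_comm]

variable {K : Type*} [Field K]

theorem finrank_eigenspace_toLin'_lt {B : Matrix n n K} {μ : K} (h : B ≠ μ • 1) :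
    finrank K (End.eigenspace (toLin' B) μ) < Fintype.card n := by
  rw [← finrank_fintype_fun_eq_card K]
  refine Submodule.finrank_lt fun htop => h (ext_iff_mulVec.mpr fun x => ?_)
  have hx : x ∈ End.eigenspace (toLin' B) μ := htop ▸ Submodule.mem_top
  simpa [smul_mulVec] using End.mem_eigenspace_iff.mp hx

theorem mem_span_singleton_of_mulVec_eq_smul (hn : Fintype.card n = 2) {B : Matrix n n K} {μ : K}
    (h : B ≠ μ • 1) {u w : n → K} (hu0 : u ≠ 0) (hu : B *ᵥ u = μ • u) (hw : B *ᵥ w = μ • w) :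
    w ∈ K ∙ u := by
  have hE : K ∙ u = End.eigenspace (toLin' B) μ := by
    refine Submodule.eq_of_le_of_finrank_le ?_ ?_
    · exact (Submodule.span_singleton_le_iff_mem _ _).mpr (End.mem_eigenspace_iff.mpr (by simpa))
    · have := finrank_eigenspace_toLin'_lt h
      rw [finrank_span_singleton hu0]
      omega
  exact hE ▸ End.mem_eigenspace_iff.mpr (by simpa)

theorem mulVec_add_smul_mem_span_singleton (hn : Fintype.card n = 2) (h2 : (2 : K) ≠ 0)
    {B : Matrix n n K} (hB : B * B = 1) (hdet : B.det = -1) {ε : K} (hε : ε * ε = 1)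
    {u : n → K} (hu0 : u ≠ 0) (hu : B *ᵥ u = ε • u) (x : n → K) : B *ᵥ x + ε • x ∈ K ∙ u :=
  mem_span_singleton_of_mulVec_eq_smul hn (ne_smul_one_of_det_eq_neg_one h2 hn hdet hε) hu0 hu
    (mulVec_mulVec_add_smul hB hε x)

end Matrix

theorem Matrix.algebraMap_comp_mulVec {k K m n : Type*} [CommSemiring k] [Semiring K]
    [Algebra k K] [Fintype n] (A : Matrix m n k) (x : n → k) :
    algebraMap k K ∘ (A *ᵥ x) = A.map (algebraMap k K) *ᵥ (algebraMap k K ∘ x) :=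
  funext (RingHom.map_mulVec _ A x)

namespace Submodule

variable (k : Type*) {K ι : Type*} [CommSemiring k] [Semiring K] [Algebra k K]

def rationalPoints (q : Submodule K (ι → K)) : Submodule k (ι → k) :=
  (q.restrictScalars k).comap ((Algebra.linearMap k K).compLeft ι)

variable {k}

theorem mem_rationalPoints {q : Submodule K (ι → K)} {x : ι → k} :
    x ∈ q.rationalPoints k ↔ algebraMap k K ∘ x ∈ q :=
  Iff.rfl

theorem rationalPoints_eq_top_iff [Finite ι] {q : Submodule K (ι → K)} :
    q.rationalPoints k = ⊤ ↔ q = ⊤ := by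
  classical
  refine ⟨fun h => eq_top_iff.mpr ?_, fun h => h ▸ rfl⟩
  rw [← (Pi.basisFun K ι).span_eq, span_le, Set.range_subset_iff]
  intro i
  have hi : algebraMap k K ∘ Pi.single i 1 ∈ q := mem_rationalPoints.mp (h ▸ mem_top)
  rw [Pi.basisFun_apply, SetLike.mem_coe]
  convert hi using 1
  ext j
  by_cases hj : j = i <;> simp [hj]

theorem mulVec_mem_rationalPoints [Fintype ι] {q : Submodule K (ι → K)} {A : Matrix ι ι k}
    (hq : ∀ x ∈ q, A.map (algebraMap k K) *ᵥ x ∈ q) {x : ι → k} (hx : x ∈ q.rationalPoints k) :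
    A *ᵥ x ∈ q.rationalPoints k :=
  mem_rationalPoints.mpr (Matrix.algebraMap_comp_mulVec (K := K) A x ▸ hq _ hx)

end Submodule

section Extension

variable {k K n : Type*} [Fintype n] [DecidableEq n]

theorem exists_mem_ne_zero_map_mulVec_eq_algebraMap_smul [CommRing k] [CommRing K] [Algebra k K]
    {A : Matrix n n k} (hA : A * A = 1) {q : Submodule K (n → K)}
    (hq : ∀ x ∈ q, A.map (algebraMap k K) *ᵥ x ∈ q) (hq_bot : q ≠ ⊥) :
    ∃ ε : k, ε * ε = 1 ∧
      ∃ u ∈ q, u ≠ 0 ∧ A.map (algebraMap k K) *ᵥ u = algebraMap k K ε • u := by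
  have hinv : Function.Involutive (A.map (algebraMap k K)).mulVecLin := fun x => by
    rw [mulVecLin_apply, mulVecLin_apply, mulVec_mulVec, ← Matrix.map_mul, hA,
      Matrix.map_one _ (map_zero _) (map_one _), one_mulVec]
  obtain ⟨u, huq, hu0, hu | hu⟩ := q.exists_ne_zero_apply_eq_or_eq_neg hinv hq hq_bot
  exacts [⟨1, one_mul 1, u, huq, hu0, by simpa using hu⟩,
    ⟨-1, by simp, u, huq, hu0, by simpa using hu⟩]

theorem mulVec_add_smul_mem_rationalPoints [Field k] [Field K] [Algebra k K]
    (hn : Fintype.card n = 2) (h2 : (2 : k) ≠ 0) {A : Matrix n n k} (hA : A * A = 1)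
    (hdet : A.det = -1) {ε : k} (hε : ε * ε = 1) {q : Submodule K (n → K)} {u : n → K}
    (huq : u ∈ q) (hu0 : u ≠ 0) (hu : A.map (algebraMap k K) *ᵥ u = algebraMap k K ε • u)
    (x : n → k) : A *ᵥ x + ε • x ∈ q.rationalPoints k := by
  set f := algebraMap k K
  have hspan := mulVec_add_smul_mem_span_singleton hn
    (by rw [← map_ofNat f 2]; exact (map_ne_zero f).mpr h2)
    (by rw [← Matrix.map_mul, hA, Matrix.map_one _ f.map_zero f.map_one])
    (by rw [← RingHom.mapMatrix_apply, ← RingHom.map_det, hdet, map_neg, map_one])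
    (by rw [← map_mul, hε, map_one]) hu0 hu (f ∘ x)
  obtain ⟨a, ha⟩ := Submodule.mem_span_singleton.mp hspan
  refine Submodule.mem_rationalPoints.mpr ?_
  convert q.smul_mem a huq
  rw [ha, ← algebraMap_comp_mulVec]
  ext i
  simp [f, Algebra.smul_def]

end Extension

theorem odd_irreducible_implies_absolutely_irreducible
    (k : Type*) [Field k] (hchar : ringChar k ≠ 2)
    (G : Type*) [Group G] (ρ : G →* GL (Fin 2) k)
    (hodd : ∃ c : G, (ρ c) ^ 2 = 1 ∧ ((ρ c : Matrix (Fin 2) (Fin 2) k)).det = -1)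
    (hirr : ∀ p : Submodule k (Fin 2 → k),
        (∀ (g : G) (x : Fin 2 → k), x ∈ p →
          ((ρ g : Matrix (Fin 2) (Fin 2) k)).mulVec x ∈ p) → p = ⊥ ∨ p = ⊤)
    (K : Type*) [Field K] [Algebra k K] :
    ∀ q : Submodule K (Fin 2 → K),
      (∀ (g : G) (x : Fin 2 → K), x ∈ q →
        (((ρ g : Matrix (Fin 2) (Fin 2) k)).map (algebraMap k K)).mulVec x ∈ q) →
      q = ⊥ ∨ q = ⊤ := by
  intro q hq
  by_contra hq'
  obtain ⟨hq_bot, hq_top⟩ := not_or.mp hq'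
  obtain ⟨c, hc2, hdet⟩ := hodd
  have h2 : (2 : k) ≠ 0 := Ring.two_ne_zero hchar
  have hA : (ρ c : Matrix (Fin 2) (Fin 2) k) * ρ c = 1 := by
    simpa [sq] using congrArg Units.val hc2
  have hp : q.rationalPoints k = ⊥ :=
    (hirr _ fun g x => Submodule.mulVec_mem_rationalPoints (hq g)).resolve_right
      (mt Submodule.rationalPoints_eq_top_iff.mp hq_top)
  obtain ⟨ε, hε, u, huq, hu0, hu⟩ :=
    exists_mem_ne_zero_map_mulVec_eq_algebraMap_smul hA (hq c) hq_bot
  refine ne_smul_one_of_det_eq_neg_one h2 (Fintype.card_fin 2) hdet (ε := -ε)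
    (by rwa [neg_mul_neg]) (ext_iff_mulVec.mpr fun x => ?_)
  have hx := (Submodule.eq_bot_iff _).mp hp _
    (mulVec_add_smul_mem_rationalPoints (Fintype.card_fin 2) h2 hA hdet hε huq hu0 hu x)
  rw [smul_mulVec, one_mulVec, neg_smul]
  exact eq_neg_of_add_eq_zero_left hx
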